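/- Let h : [0,T]×ℝ^n → [0,∞) be integrable and suppose that for all R > 0 and a.e. τ ∈ [0,T]: ∫_{|x|≤R} h(x,τ) dx ≤ C ∫₀^τ ∫_{|x|≤R+C₀(τ−t)} h(x,t) dx dt, with the exceptional null set of τ independent of R. Then h = 0 almost everywhere on [0,T]×ℝ^n. -/
import Mathlib
open MeasureTheory

open intervalIntegral in
private lemma stmt16_auxPow (k : ℕ) {τ : ℝ} (hτ : (0:ℝ) ≤ τ) :
    ∫ t in Set.Ioc (0:ℝ) τ, t ^ k = τ ^ (k+1) / ((k:ℝ)+1) := by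
  rw [← intervalIntegral.integral_of_le hτ, integral_pow]
  norm_num

/-- Finite-propagation-speed Gronwall argument: if `h ≥ 0` is integrable on
`[0,T]×ℝ^n` and for every `R > 0` and a.e. `τ ∈ [0,T]` (with exceptional null set
independent of `R`) one has
`∫_{|x|≤R} h(x,τ) dx ≤ C ∫₀^τ ∫_{|x|≤R+C₀(τ−t)} h(x,t) dx dt`,
then `h = 0` a.e. on `[0,T]×ℝ^n`. -/
theorem stmt16 {n : ℕ} (T C C₀ : ℝ) (hC : 0 < C) (hC₀ : 0 < C₀)
    (h : ℝ → EuclideanSpace ℝ (Fin n) → ℝ) (hpos : ∀ t x, 0 ≤ h t x)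
    (hint : IntegrableOn (fun p : ℝ × EuclideanSpace ℝ (Fin n) => h p.1 p.2)
      (Set.Icc 0 T ×ˢ (Set.univ : Set (EuclideanSpace ℝ (Fin n)))))
    (N : Set ℝ) (hN : volume N = 0)
    (hgron : ∀ τ ∈ Set.Icc (0:ℝ) T \ N, ∀ R > (0:ℝ),
      ∫ x in Metric.closedBall (0 : EuclideanSpace ℝ (Fin n)) R, h τ x ≤
        C * ∫ t in Set.Ioc (0:ℝ) τ,
          ∫ x in Metric.closedBall (0 : EuclideanSpace ℝ (Fin n)) (R + C₀ * (τ - t)),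
            h t x) :
    ∀ᵐ p ∂(volume.restrict
        (Set.Icc 0 T ×ˢ (Set.univ : Set (EuclideanSpace ℝ (Fin n))))),
      h (Prod.fst p) (Prod.snd p) = 0 := by
  have hres : volume.restrict (Set.Icc 0 T ×ˢ (Set.univ : Set (EuclideanSpace ℝ (Fin n)))) =
      (volume.restrict (Set.Icc 0 T)).prod (volume : Measure (EuclideanSpace ℝ (Fin n))) := by
    rw [Measure.volume_eq_prod, ← Measure.prod_restrict, Measure.restrict_univ]
  have hintP : Integrable (fun p : ℝ × EuclideanSpace ℝ (Fin n) => h p.1 p.2)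
      ((volume.restrict (Set.Icc 0 T)).prod volume) := by
    rw [← hres]; exact hint
  set F : ℝ → ℝ := fun τ => ∫ x, h τ x with hF
  have hFint : Integrable F (volume.restrict (Set.Icc 0 T)) := hintP.integral_prod_left
  have hFIcc : IntegrableOn F (Set.Icc 0 T) := hFint
  have hFnn : ∀ τ, 0 ≤ F τ := fun τ => integral_nonneg (hpos τ)
  have hsec : ∀ᵐ τ ∂volume.restrict (Set.Icc 0 T), Integrable (h τ) volume :=
    hintP.prod_right_ae
  have hIcc : ∀ᵐ τ ∂volume.restrict (Set.Icc 0 T), τ ∈ Set.Icc (0:ℝ) T :=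
    self_mem_ae_restrict measurableSet_Icc
  have hNae : ∀ᵐ τ ∂volume.restrict (Set.Icc 0 T), τ ∉ N :=
    ae_restrict_of_ae (measure_eq_zero_iff_ae_notMem.mp hN)
  -- the key Gronwall-type inequality for F
  have hkey : ∀ᵐ τ ∂volume.restrict (Set.Icc 0 T), F τ ≤ C * ∫ t in Set.Ioc 0 τ, F t := by
    filter_upwards [hsec, hIcc, hNae] with τ hτint hτIcc hτN
    have hsub : Set.Ioc (0:ℝ) τ ⊆ Set.Icc 0 T := fun t ht =>
      ⟨le_of_lt ht.1, le_trans ht.2 hτIcc.2⟩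
    have hsec' : ∀ᵐ t ∂volume.restrict (Set.Ioc (0:ℝ) τ), Integrable (h t) volume :=
      ae_restrict_of_ae_restrict_of_subset hsub hsec
    have hFIoc : IntegrableOn F (Set.Ioc 0 τ) := hFIcc.mono_set hsub
    have hbound : ∀ k : ℕ,
        ∫ x in Metric.closedBall (0:EuclideanSpace ℝ (Fin n)) ((k:ℝ)+1), h τ x ≤
          C * ∫ t in Set.Ioc 0 τ, F t := by
      intro k
      refine le_trans (hgron τ ⟨hτIcc, hτN⟩ ((k:ℝ)+1) (by positivity)) ?_
      refine mul_le_mul_of_nonneg_left ?_ hC.le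
      refine integral_mono_of_nonneg ?_ hFIoc ?_
      · exact Filter.Eventually.of_forall fun t => integral_nonneg (hpos t)
      · filter_upwards [hsec'] with t htint
        exact setIntegral_le_integral htint (Filter.Eventually.of_forall (hpos t))
    have hmono : Monotone
        (fun k : ℕ => Metric.closedBall (0:EuclideanSpace ℝ (Fin n)) ((k:ℝ)+1)) := by
      intro a b hab
      refine Metric.closedBall_subset_closedBall ?_
      have : (a:ℝ) ≤ b := Nat.cast_le.mpr hab
      linarith
    have hunion :
        (⋃ k : ℕ, Metric.closedBall (0:EuclideanSpace ℝ (Fin n)) ((k:ℝ)+1)) = Set.univ := by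
      refine Set.eq_univ_iff_forall.mpr fun x => ?_
      obtain ⟨k, hk⟩ := exists_nat_ge (‖x‖)
      refine Set.mem_iUnion.mpr ⟨k, ?_⟩
      simp only [Metric.mem_closedBall, dist_zero_right]
      linarith
    have htend : Filter.Tendsto
        (fun k : ℕ => ∫ x in Metric.closedBall (0:EuclideanSpace ℝ (Fin n)) ((k:ℝ)+1), h τ x)
        Filter.atTop (nhds (F τ)) := by
      have := tendsto_setIntegral_of_monotone (fun k : ℕ => measurableSet_closedBall)
        hmono (by rw [hunion]; exact hτint.integrableOn)
      rwa [hunion, setIntegral_univ] at this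
    exact le_of_tendsto htend (Filter.Eventually.of_forall hbound)
  set A : ℝ := ∫ t in Set.Icc (0:ℝ) T, F t with hA
  -- iterate Gronwall
  have hB : ∀ k : ℕ, ∀ᵐ τ ∂volume.restrict (Set.Icc 0 T),
      F τ ≤ C * A * (C * τ)^k / (Nat.factorial k) := by
    intro k
    induction k with
    | zero =>
      filter_upwards [hkey, hIcc] with τ hτ hτIcc
      have h1 : ∫ t in Set.Ioc (0:ℝ) τ, F t ≤ A := by
        refine setIntegral_mono_set hFIcc (Filter.Eventually.of_forall hFnn) ?_
        exact HasSubset.Subset.eventuallyLE fun t ht => ⟨le_of_lt ht.1, le_trans ht.2 hτIcc.2⟩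
      have := le_trans hτ (mul_le_mul_of_nonneg_left h1 hC.le)
      simpa using this
    | succ k ih =>
      filter_upwards [hkey, hIcc, ih] with τ hτ hτIcc _
      have hsub : Set.Ioc (0:ℝ) τ ⊆ Set.Icc 0 T := fun t ht =>
        ⟨le_of_lt ht.1, le_trans ht.2 hτIcc.2⟩
      have ih' : ∀ᵐ t ∂volume.restrict (Set.Ioc (0:ℝ) τ),
          F t ≤ C * A * (C * t)^k / (Nat.factorial k) :=
        ae_restrict_of_ae_restrict_of_subset hsub ih
      have hBint : IntegrableOn (fun t => C * A * (C * t)^k / (Nat.factorial k))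
          (Set.Ioc (0:ℝ) τ) := by
        apply Continuous.integrableOn_Ioc
        exact (continuous_const.mul ((continuous_const.mul continuous_id).pow k)).div_const _
      have h2 : ∫ t in Set.Ioc (0:ℝ) τ, F t ≤
          ∫ t in Set.Ioc (0:ℝ) τ, C * A * (C * t)^k / (Nat.factorial k) :=
        integral_mono_of_nonneg (Filter.Eventually.of_forall hFnn) hBint ih'
      have h3 : ∫ t in Set.Ioc (0:ℝ) τ, C * A * (C * t)^k / (Nat.factorial k) =
          (C * A * C^k / (Nat.factorial k)) * (τ^(k+1) / ((k:ℝ)+1)) := by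
        have heq : ∀ t : ℝ, C * A * (C * t)^k / (Nat.factorial k) =
            (C * A * C^k / (Nat.factorial k)) * t^k := by
          intro t; rw [mul_pow]; ring
        simp_rw [heq]
        rw [integral_const_mul, stmt16_auxPow k hτIcc.1]
      have h4 : C * ((C * A * C^k / (Nat.factorial k)) * (τ^(k+1) / ((k:ℝ)+1))) =
          C * A * (C * τ)^(k+1) / (Nat.factorial (k+1)) := by
        rw [Nat.factorial_succ, mul_pow]
        have hk : (Nat.factorial k : ℝ) ≠ 0 := Nat.cast_ne_zero.mpr (Nat.factorial_ne_zero k)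
        have hk1 : ((k:ℝ)+1) ≠ 0 := by positivity
        push_cast
        field_simp
        ring
      calc F τ ≤ C * ∫ t in Set.Ioc (0:ℝ) τ, F t := hτ
        _ ≤ C * ∫ t in Set.Ioc (0:ℝ) τ, C * A * (C * t)^k / (Nat.factorial k) :=
            mul_le_mul_of_nonneg_left h2 hC.le
        _ = C * A * (C * τ)^(k+1) / (Nat.factorial (k+1)) := by rw [h3, h4]
  -- conclude F = 0 a.e.
  have hF0 : ∀ᵐ τ ∂volume.restrict (Set.Icc 0 T), F τ = 0 := by
    filter_upwards [ae_all_iff.mpr hB] with τ hτ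
    have htend : Filter.Tendsto (fun k : ℕ => C * A * (C * τ)^k / (Nat.factorial k))
        Filter.atTop (nhds 0) := by
      have h0 := FloorSemiring.tendsto_pow_div_factorial_atTop (C * τ)
      have := h0.const_mul (C * A)
      simpa [mul_div_assoc] using this
    have hle : F τ ≤ 0 := ge_of_tendsto htend (Filter.Eventually.of_forall hτ)
    exact le_antisymm hle (hFnn τ)
  have hae : ∀ᵐ τ ∂volume.restrict (Set.Icc 0 T), ∀ᵐ x : EuclideanSpace ℝ (Fin n), h τ x = 0 := by
    filter_upwards [hF0, hsec] with τ hτ0 hτint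
    exact (integral_eq_zero_iff_of_nonneg (hpos τ) hτint).mp hτ0
  -- transfer to product measure via a measurable representative
  rw [hres]
  set g : ℝ × EuclideanSpace ℝ (Fin n) → ℝ := hintP.1.mk _ with hg
  have hgm : StronglyMeasurable g := hintP.1.stronglyMeasurable_mk
  have heq : (fun p : ℝ × EuclideanSpace ℝ (Fin n) => h p.1 p.2)
      =ᵐ[(volume.restrict (Set.Icc 0 T)).prod volume] g := hintP.1.ae_eq_mk
  have heq' : ∀ᵐ τ ∂volume.restrict (Set.Icc 0 T),
      ∀ᵐ x : EuclideanSpace ℝ (Fin n), h τ x = g (τ, x) := Measure.ae_ae_of_ae_prod heq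
  have hgae : ∀ᵐ τ ∂volume.restrict (Set.Icc 0 T),
      ∀ᵐ x : EuclideanSpace ℝ (Fin n), g (τ, x) = 0 := by
    filter_upwards [hae, heq'] with τ h1 h2
    filter_upwards [h1, h2] with x hx1 hx2
    rw [← hx2]; exact hx1
  have hg0 : ∀ᵐ p ∂(volume.restrict (Set.Icc 0 T)).prod
      (volume : Measure (EuclideanSpace ℝ (Fin n))), g p = 0 := by
    refine (Measure.ae_prod_iff_ae_ae ?_).mpr hgae
    exact hgm.measurable (measurableSet_singleton 0)
  filter_upwards [heq, hg0] with p h1 h2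
  rw [h1]; exact h2
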